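/- The class of real-time simplified counter languages SCL is closed under complement, intersection, union, set difference, and symmetric difference. -/
import Mathlib


/-- A counter update: add an integer, or reset to zero (the ×0 operation). -/
inductive CUpd where
  | add (m : ℤ)
  | reset
deriving DecidableEq

def CUpd.apply : CUpd → ℤ → ℤ
  | .add m, c => c + m
  | .reset, _ => 0

/-- A general real-time counter machine with states `Fin n` and `k` counters. -/
structure CM (σ : Type) (n k : ℕ) where
  q0 : Fin n
  u : σ → Fin n → (Fin k → Bool) → Fin k → CUpd
  δ : σ → Fin n → (Fin k → Bool) → Fin n
  F : Set (Fin n × (Fin k → Bool))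

/-- Elementwise zero-check: `false` if the counter is 0, `true` otherwise. -/
def zcheck {k : ℕ} (c : Fin k → ℤ) : Fin k → Bool :=
  fun i => decide (c i ≠ 0)

def CM.step {σ : Type} {n k : ℕ} (M : CM σ n k) (cfg : Fin n × (Fin k → ℤ)) (x : σ) :
    Fin n × (Fin k → ℤ) :=
  (M.δ x cfg.1 (zcheck cfg.2), fun i => (M.u x cfg.1 (zcheck cfg.2) i).apply (cfg.2 i))

/-- Real-time run: start at `⟨q₀, 0⟩` and take one transition per input token. -/
def CM.run {σ : Type} {n k : ℕ} (M : CM σ n k) (xs : List σ) : Fin n × (Fin k → ℤ) :=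
  xs.foldl M.step (M.q0, fun _ => 0)

def CM.accepts {σ : Type} {n k : ℕ} (M : CM σ n k) (xs : List σ) : Prop :=
  ((M.run xs).1, zcheck (M.run xs).2) ∈ M.F

def CM.acceptsLang {σ : Type} {n k : ℕ} (M : CM σ n k) (L : Set (List σ)) : Prop :=
  ∀ xs, M.accepts xs ↔ xs ∈ L

/-- An update is incremental if it is `×0` or adds a value in `{-1, 0, +1}`. -/
def CUpd.incremental : CUpd → Prop
  | .add m => m.natAbs ≤ 1
  | .reset => True

/-- A machine is simplified if its updates depend only on the input symbol and
are restricted to `{-1, +0, +1, ×0}`. -/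
def CM.simplified {σ : Type} {n k : ℕ} (M : CM σ n k) : Prop :=
  (∀ x q q' b b', M.u x q b = M.u x q' b') ∧ ∀ x q b i, (M.u x q b i).incremental

/-- The class of languages accepted in real time by general counter machines. -/
def CL (σ : Type) : Set (Set (List σ)) :=
  {L | ∃ n k, ∃ M : CM σ n k, M.acceptsLang L}

/-- The class of languages accepted in real time by simplified counter machines. -/
def SCL (σ : Type) : Set (Set (List σ)) :=
  {L | ∃ n k, ∃ M : CM σ n k, M.simplified ∧ M.acceptsLang L}

section Aux

variable {σ : Type} {n₁ k₁ n₂ k₂ : ℕ}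

/-- Product of two counter machines, with acceptance combined by `P`. -/
def CM.prod (M₁ : CM σ n₁ k₁) (M₂ : CM σ n₂ k₂) (P : Prop → Prop → Prop) :
    CM σ (n₁ * n₂) (k₁ + k₂) where
  q0 := finProdFinEquiv (M₁.q0, M₂.q0)
  u := fun x q b i =>
    Sum.elim
      (M₁.u x (finProdFinEquiv.symm q).1 (fun j => b (finSumFinEquiv (.inl j))))
      (M₂.u x (finProdFinEquiv.symm q).2 (fun j => b (finSumFinEquiv (.inr j))))
      (finSumFinEquiv.symm i)
  δ := fun x q b =>
    finProdFinEquiv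
      (M₁.δ x (finProdFinEquiv.symm q).1 (fun j => b (finSumFinEquiv (.inl j))),
       M₂.δ x (finProdFinEquiv.symm q).2 (fun j => b (finSumFinEquiv (.inr j))))
  F := {p | P (((finProdFinEquiv.symm p.1).1, fun j => p.2 (finSumFinEquiv (.inl j))) ∈ M₁.F)
             (((finProdFinEquiv.symm p.1).2, fun j => p.2 (finSumFinEquiv (.inr j))) ∈ M₂.F)}

/-- Combine two counter valuations into one. -/
def combineC {k₁ k₂ : ℕ} (c₁ : Fin k₁ → ℤ) (c₂ : Fin k₂ → ℤ) : Fin (k₁ + k₂) → ℤ :=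
  fun i => Sum.elim c₁ c₂ (finSumFinEquiv.symm i)

@[simp] lemma combineC_castAdd {k₁ k₂ : ℕ} (c₁ : Fin k₁ → ℤ) (c₂ : Fin k₂ → ℤ) (j : Fin k₁) :
    combineC c₁ c₂ (Fin.castAdd k₂ j) = c₁ j := by
  rw [combineC, ← finSumFinEquiv_apply_left, Equiv.symm_apply_apply, Sum.elim_inl]

@[simp] lemma combineC_natAdd {k₁ k₂ : ℕ} (c₁ : Fin k₁ → ℤ) (c₂ : Fin k₂ → ℤ) (j : Fin k₂) :
    combineC c₁ c₂ (Fin.natAdd k₁ j) = c₂ j := by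
  rw [combineC, ← finSumFinEquiv_apply_right, Equiv.symm_apply_apply, Sum.elim_inr]

@[simp] lemma zcheck_combineC_castAdd {k₁ k₂ : ℕ} (c₁ : Fin k₁ → ℤ) (c₂ : Fin k₂ → ℤ)
    (j : Fin k₁) : zcheck (combineC c₁ c₂) (Fin.castAdd k₂ j) = zcheck c₁ j := by
  simp [zcheck]

@[simp] lemma zcheck_combineC_natAdd {k₁ k₂ : ℕ} (c₁ : Fin k₁ → ℤ) (c₂ : Fin k₂ → ℤ)
    (j : Fin k₂) : zcheck (combineC c₁ c₂) (Fin.natAdd k₁ j) = zcheck c₂ j := by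
  simp [zcheck]

/-- Combine two configurations into one. -/
def combineCfg {n₁ k₁ n₂ k₂ : ℕ} (c₁ : Fin n₁ × (Fin k₁ → ℤ)) (c₂ : Fin n₂ × (Fin k₂ → ℤ)) :
    Fin (n₁ * n₂) × (Fin (k₁ + k₂) → ℤ) :=
  (finProdFinEquiv (c₁.1, c₂.1), combineC c₁.2 c₂.2)

lemma CM.prod_step (M₁ : CM σ n₁ k₁) (M₂ : CM σ n₂ k₂) (P : Prop → Prop → Prop)
    (c₁ : Fin n₁ × (Fin k₁ → ℤ)) (c₂ : Fin n₂ × (Fin k₂ → ℤ)) (x : σ) :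
    (M₁.prod M₂ P).step (combineCfg c₁ c₂) x = combineCfg (M₁.step c₁ x) (M₂.step c₂ x) := by
  unfold CM.step CM.prod combineCfg
  refine Prod.ext ?_ ?_
  · simp
  · funext i
    obtain ⟨s, rfl⟩ := finSumFinEquiv.surjective i
    cases s <;> simp [combineC]

lemma CM.prod_foldl (M₁ : CM σ n₁ k₁) (M₂ : CM σ n₂ k₂) (P : Prop → Prop → Prop)
    (xs : List σ) :
    ∀ (c₁ : Fin n₁ × (Fin k₁ → ℤ)) (c₂ : Fin n₂ × (Fin k₂ → ℤ)),
      xs.foldl (M₁.prod M₂ P).step (combineCfg c₁ c₂) =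
        combineCfg (xs.foldl M₁.step c₁) (xs.foldl M₂.step c₂) := by
  induction xs with
  | nil => intro c₁ c₂; rfl
  | cons x xs ih =>
    intro c₁ c₂
    simp [List.foldl_cons, CM.prod_step, ih]

lemma CM.prod_run (M₁ : CM σ n₁ k₁) (M₂ : CM σ n₂ k₂) (P : Prop → Prop → Prop) (xs : List σ) :
    (M₁.prod M₂ P).run xs = combineCfg (M₁.run xs) (M₂.run xs) := by
  unfold CM.run
  have h0 : ((M₁.prod M₂ P).q0, (fun _ => 0 : Fin (k₁ + k₂) → ℤ)) =
      combineCfg (M₁.q0, fun _ => 0) (M₂.q0, fun _ => 0) := by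
    refine Prod.ext rfl ?_
    funext i
    obtain ⟨s, rfl⟩ := finSumFinEquiv.surjective i
    cases s <;> simp [combineC, combineCfg, CM.prod]
  rw [h0, CM.prod_foldl]

lemma CM.prod_accepts (M₁ : CM σ n₁ k₁) (M₂ : CM σ n₂ k₂) (P : Prop → Prop → Prop)
    (xs : List σ) :
    (M₁.prod M₂ P).accepts xs ↔ P (M₁.accepts xs) (M₂.accepts xs) := by
  unfold CM.accepts
  rw [CM.prod_run]
  have key : ∀ (r₁ : Fin n₁ × (Fin k₁ → ℤ)) (r₂ : Fin n₂ × (Fin k₂ → ℤ)),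
      (((combineCfg r₁ r₂).1, zcheck (combineCfg r₁ r₂).2) ∈ (M₁.prod M₂ P).F) =
        P ((r₁.1, zcheck r₁.2) ∈ M₁.F) ((r₂.1, zcheck r₂.2) ∈ M₂.F) := by
    intro r₁ r₂
    show P _ _ = P _ _
    congr 1 <;>
    · congr 1
      refine Prod.ext ?_ ?_
      · simp [combineCfg]
      · funext j; simp [combineCfg]
  rw [key]

lemma CM.prod_simplified (M₁ : CM σ n₁ k₁) (M₂ : CM σ n₂ k₂) (P : Prop → Prop → Prop)
    (h₁ : M₁.simplified) (h₂ : M₂.simplified) : (M₁.prod M₂ P).simplified := by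
  constructor
  · intro x q q' b b'
    funext i
    show Sum.elim
        (M₁.u x (finProdFinEquiv.symm q).1 (fun j => b (finSumFinEquiv (.inl j))))
        (M₂.u x (finProdFinEquiv.symm q).2 (fun j => b (finSumFinEquiv (.inr j))))
        (finSumFinEquiv.symm i) = _
    rw [h₁.1 x (finProdFinEquiv.symm q).1 (finProdFinEquiv.symm q').1
        (fun j => b (finSumFinEquiv (.inl j))) (fun j => b' (finSumFinEquiv (.inl j))),
      h₂.1 x (finProdFinEquiv.symm q).2 (finProdFinEquiv.symm q').2
        (fun j => b (finSumFinEquiv (.inr j))) (fun j => b' (finSumFinEquiv (.inr j)))]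
    rfl
  · intro x q b i
    show (Sum.elim
        (M₁.u x (finProdFinEquiv.symm q).1 (fun j => b (finSumFinEquiv (.inl j))))
        (M₂.u x (finProdFinEquiv.symm q).2 (fun j => b (finSumFinEquiv (.inr j))))
        (finSumFinEquiv.symm i)).incremental
    cases finSumFinEquiv.symm i with
    | inl j => exact h₁.2 x _ _ j
    | inr j => exact h₂.2 x _ _ j

/-- The key closure lemma: combining two SCL languages with any binary
propositional connective stays in SCL. -/
lemma SCL.closed (P : Prop → Prop → Prop) {L₁ L₂ : Set (List σ)}
    (h₁ : L₁ ∈ SCL σ) (h₂ : L₂ ∈ SCL σ) :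
    {xs | P (xs ∈ L₁) (xs ∈ L₂)} ∈ SCL σ := by
  obtain ⟨n₁, k₁, M₁, hs₁, ha₁⟩ := h₁
  obtain ⟨n₂, k₂, M₂, hs₂, ha₂⟩ := h₂
  refine ⟨n₁ * n₂, k₁ + k₂, M₁.prod M₂ P, CM.prod_simplified M₁ M₂ P hs₁ hs₂, ?_⟩
  intro xs
  rw [CM.prod_accepts]
  constructor <;> intro h
  · simpa [ha₁ xs, ha₂ xs] using h
  · simpa [ha₁ xs, ha₂ xs] using h

end Aux

/-- `SCL` is closed under complement, intersection, union, set difference, and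
symmetric difference. -/
theorem stmt9 (σ : Type) (L₁ L₂ : Set (List σ)) (h₁ : L₁ ∈ SCL σ) (h₂ : L₂ ∈ SCL σ) :
    L₁ᶜ ∈ SCL σ ∧ L₁ ∩ L₂ ∈ SCL σ ∧ L₁ ∪ L₂ ∈ SCL σ ∧ L₁ \ L₂ ∈ SCL σ ∧
      (L₁ \ L₂) ∪ (L₂ \ L₁) ∈ SCL σ := by
  exact ⟨SCL.closed (fun p _ => ¬ p) h₁ h₂,
    SCL.closed (fun p q => p ∧ q) h₁ h₂,
    SCL.closed (fun p q => p ∨ q) h₁ h₂,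
    SCL.closed (fun p q => p ∧ ¬ q) h₁ h₂,
    SCL.closed (fun p q => (p ∧ ¬ q) ∨ (q ∧ ¬ p)) h₁ h₂⟩
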